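/- arXiv:1012.2540 — 2 statements merged into one kernel-verified Lean document; each statement's English description precedes it below -/
import Mathlib

section
/- Let H be a Hopf algebra over a field k and let M and N be normal Hopf subalgebras of H such that M ∩ N = k·1. Then mn = nm for all m ∈ M and n ∈ N. -/
/-!
For `m ∈ M` and `n ∈ N` consider `u = ∑ m₁ n₁ S(m₂) S(n₂) ⊗ n₃ m₃ ∈ H ⊗ H`. Multiplying the two
legs gives `mn`, while applying `ε ⊗ id` gives `nm`. Normality of `N` puts the first leg
`(m₁ n₁ S(m₂)) S(n₂)` in `N`, and normality of `M` puts it, read as `m₁ (n₁ S(m₂) S(n₂))`, in `M`.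
Over a field this forces `u ∈ (M ∩ N) ⊗ H = k·1 ⊗ H`, where multiplication and `ε ⊗ id` agree.
-/


open scoped TensorProduct

/-- The linear map `h ↦ h₁ a S(h₂)` (Sweedler notation), used to express normality
of a Hopf subalgebra. -/
noncomputable def adjL (k : Type*) {H : Type*} [CommRing k] [Ring H] [HopfAlgebra k H]
    (a : H) : H →ₗ[k] H :=
  (TensorProduct.lift (((LinearMap.mul k H).comp (LinearMap.mulRight k a)).compl₂
    (HopfAlgebra.antipode (R := k)))) ∘ₗ Coalgebra.comul

/-- The linear map `h ↦ S(h₁) a h₂` (Sweedler notation). -/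
noncomputable def adjR (k : Type*) {H : Type*} [CommRing k] [Ring H] [HopfAlgebra k H]
    (a : H) : H →ₗ[k] H :=
  (TensorProduct.lift ((LinearMap.mul k H).comp
    ((LinearMap.mulRight k a).comp (HopfAlgebra.antipode (R := k))))) ∘ₗ Coalgebra.comul

/-- A subalgebra `A` of a Hopf algebra `H` is a Hopf subalgebra if the comultiplication
maps `A` into `A ⊗ A` (viewed inside `H ⊗ H`) and the antipode maps `A` into `A`. -/
def IsHopfSubalgebra (k : Type*) {H : Type*} [CommRing k] [Ring H] [HopfAlgebra k H]
    (A : Subalgebra k H) : Prop :=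
  (∀ a ∈ A, Coalgebra.comul (R := k) a ∈
    LinearMap.range (TensorProduct.mapIncl (Subalgebra.toSubmodule A)
      (Subalgebra.toSubmodule A))) ∧
  ∀ a ∈ A, HopfAlgebra.antipode (R := k) a ∈ A

/-- A Hopf subalgebra `A` of `H` is normal if `h₁ a S(h₂) ∈ A` and `S(h₁) a h₂ ∈ A`
for all `h ∈ H` and `a ∈ A`. -/
def IsNormalHopfSubalgebra (k : Type*) {H : Type*} [CommRing k] [Ring H] [HopfAlgebra k H]
    (A : Subalgebra k H) : Prop :=
  IsHopfSubalgebra k A ∧ ∀ a ∈ A, ∀ h : H, adjL k a h ∈ A ∧ adjR k a h ∈ A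

open TensorProduct

theorem tmul_mem_range_rTensor_subtype {R V W : Type*} [CommSemiring R] [AddCommMonoid V]
    [Module R V] [AddCommMonoid W] [Module R W] {P : Submodule R V} {v : V} (hv : v ∈ P) (w : W) :
    v ⊗ₜ[R] w ∈ LinearMap.range (P.subtype.rTensor W) :=
  ⟨⟨v, hv⟩ ⊗ₜ w, rfl⟩

theorem equivFinsuppOfBasisRight_apply_mem {R V W ι : Type*} [CommSemiring R] [AddCommMonoid V]
    [Module R V] [AddCommMonoid W] [Module R W] [DecidableEq ι] (b : Module.Basis ι R W)
    {P : Submodule R V} {t : V ⊗[R] W} (ht : t ∈ LinearMap.range (P.subtype.rTensor W)) (i : ι) :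
    equivFinsuppOfBasisRight b t i ∈ P := by
  obtain ⟨s, rfl⟩ := ht
  induction s using TensorProduct.induction_on with
  | zero => simp
  | tmul p w =>
    rw [LinearMap.rTensor_tmul, equivFinsuppOfBasisRight_apply_tmul_apply]
    exact P.smul_mem _ p.2
  | add x y hx hy =>
    rw [map_add, map_add, Finsupp.add_apply]
    exact P.add_mem hx hy

theorem mem_range_rTensor_subtype_inf {K V W : Type*} [Field K] [AddCommGroup V] [Module K V]
    [AddCommGroup W] [Module K W] {P Q : Submodule K V} {t : V ⊗[K] W}
    (hP : t ∈ LinearMap.range (P.subtype.rTensor W))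
    (hQ : t ∈ LinearMap.range (Q.subtype.rTensor W)) :
    t ∈ LinearMap.range ((P ⊓ Q).subtype.rTensor W) := by
  classical
  -- the coefficients of `t` in a basis of `W` lie in both `P` and `Q`
  let b := Module.Basis.ofVectorSpace K W
  rw [← (equivFinsuppOfBasisRight b).symm_apply_apply t, equivFinsuppOfBasisRight_symm_apply]
  exact Submodule.finsuppSum_mem _ _ _ _ fun i _ => tmul_mem_range_rTensor_subtype
    (Submodule.mem_inf.mpr
      ⟨equivFinsuppOfBasisRight_apply_mem b hP i, equivFinsuppOfBasisRight_apply_mem b hQ i⟩) _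

/-- Sweedler data for the iterated coproduct: `(Δ ⊗ id) (Δ a) = ∑ a₁ ⊗ a₂ ⊗ a₃` with
`a₁ = (inner i).left j`, `a₂ = (inner i).right j`, `a₃ = outer.right i`. -/
structure Coalgebra.Repr₂ (k : Type*) {H : Type*} [CommSemiring k] [AddCommMonoid H]
    [Module k H] [CoalgebraStruct k H] (a : H) (ι κ : Type*) where
  outer : Repr k a ι
  inner : ∀ i, Repr k (outer.left i) κ

open Coalgebra (Repr Repr₂ counit sum_tmul_tmul_eq sum_tmul_counit_eq sum_counit_smul)
open HopfAlgebra

theorem mul'_eq_lid_rTensor_counit_of_mem {k H : Type*} [CommSemiring k] [Semiring H]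
    [Bialgebra k H] {t : H ⊗[k] H}
    (ht : t ∈ LinearMap.range ((Subalgebra.toSubmodule (⊥ : Subalgebra k H)).subtype.rTensor H)) :
    LinearMap.mul' k H t = TensorProduct.lid k H (counit.rTensor H t) := by
  obtain ⟨s, rfl⟩ := ht
  induction s using TensorProduct.induction_on with
  | zero => simp
  | tmul p h =>
    obtain ⟨c, hc⟩ := Algebra.mem_bot.mp p.2
    simp [← hc, Algebra.smul_def]
  | add x y hx hy => simp only [map_add, hx, hy]

section Sweedler

variable {k H ι κ : Type*} [CommRing k] [Ring H] [HopfAlgebra k H] {a : H}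

theorem adjL_eq_sum (x : H) (r : Repr k a ι) :
    adjL k x a = ∑ i ∈ r.index, r.left i * x * antipode k (r.right i) := by
  simp [adjL, ← r.eq, map_sum]

namespace Coalgebra.Repr₂

variable (R : Repr₂ k a ι κ)

theorem sum_tmul_antipode_mul :
    ∑ i ∈ R.outer.index, ∑ j ∈ (R.inner i).index,
      (R.inner i).left j ⊗ₜ[k] (antipode k ((R.inner i).right j) * R.outer.right i) =
      a ⊗ₜ 1 := by
  have h := congrArg ((LinearMap.mul' k H ∘ₗ (antipode k).rTensor H).lTensor H)
    (sum_tmul_tmul_eq R.outer R.inner fun i => Repr.arbitrary k (R.outer.right i))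
  have hε := congrArg ((Algebra.linearMap k H).lTensor H) (sum_tmul_counit_eq R.outer)
  simp only [map_sum, LinearMap.lTensor_tmul, LinearMap.comp_apply, LinearMap.rTensor_tmul,
    LinearMap.mul'_apply, ← tmul_sum, sum_antipode_mul_eq_algebraMap_counit] at h
  simp only [map_sum, LinearMap.lTensor_tmul, Algebra.linearMap_apply, map_one] at hε
  rw [h, hε]

theorem sum_mul_mul_antipode_mul (p q : H) :
    ∑ i ∈ R.outer.index, ∑ j ∈ (R.inner i).index,
      p * (R.inner i).left j * q * antipode k ((R.inner i).right j) * R.outer.right i =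
      p * a * q := by
  have h := congrArg (lift (LinearMap.mul k H ∘ₗ LinearMap.mulRight k q ∘ₗ LinearMap.mulLeft k p))
    R.sum_tmul_antipode_mul
  simpa [map_sum, mul_assoc] using h

theorem sum_counit_mul_counit_smul :
    ∑ i ∈ R.outer.index, ∑ j ∈ (R.inner i).index,
      (counit (R := k) ((R.inner i).left j) * counit ((R.inner i).right j)) • R.outer.right i =
      a := by
  conv_rhs => rw [← sum_counit_smul R.outer]
  refine Finset.sum_congr rfl fun i _ => ?_
  rw [← Finset.sum_smul]
  congr 1
  conv_rhs => rw [← sum_counit_smul (R.inner i)]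
  simp [map_sum, smul_eq_mul]

end Coalgebra.Repr₂

variable {A : Subalgebra k H}

theorem IsHopfSubalgebra.exists_repr (hA : IsHopfSubalgebra k A) (ha : a ∈ A) :
    ∃ r : Repr k a (A × A), ∀ i, r.left i ∈ A ∧ r.right i ∈ A := by
  obtain ⟨w, hw⟩ := hA.1 a ha
  obtain ⟨T, rfl⟩ := exists_finset w
  simp only [mapIncl, map_sum, map_tmul, Submodule.subtype_apply] at hw
  exact ⟨⟨T, fun i => i.1, fun i => i.2, hw⟩, fun i => ⟨i.1.2, i.2.2⟩⟩

theorem IsHopfSubalgebra.exists_repr₂ (hA : IsHopfSubalgebra k A) (ha : a ∈ A) :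
    ∃ R : Repr₂ k a (A × A) (A × A), ∀ i j, (R.inner i).left j ∈ A ∧ (R.inner i).right j ∈ A := by
  obtain ⟨r, hr⟩ := hA.exists_repr ha
  choose s hs using fun i => hA.exists_repr (hr i).1
  exact ⟨⟨r, s⟩, hs⟩

end Sweedler

section CommutatorTensor

variable {k H ι κ ι' κ' : Type*} [CommRing k] [Ring H] [HopfAlgebra k H] {m n : H}
  (R : Repr₂ k m ι κ) (T : Repr₂ k n ι' κ')

/-- `∑ m₁ n₁ S(m₂) S(n₂) ⊗ n₃ m₃` in Sweedler notation. -/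
noncomputable def commutatorTensor : H ⊗[k] H :=
  ∑ i ∈ R.outer.index, ∑ j ∈ (R.inner i).index, ∑ i' ∈ T.outer.index, ∑ j' ∈ (T.inner i').index,
    ((R.inner i).left j * (T.inner i').left j' * antipode k ((R.inner i).right j) *
      antipode k ((T.inner i').right j')) ⊗ₜ[k] (T.outer.right i' * R.outer.right i)

theorem mul'_commutatorTensor : LinearMap.mul' k H (commutatorTensor R T) = m * n := calc
  _ = ∑ i ∈ R.outer.index, ∑ j ∈ (R.inner i).index,
        (∑ i' ∈ T.outer.index, ∑ j' ∈ (T.inner i').index,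
          (R.inner i).left j * (T.inner i').left j' * antipode k ((R.inner i).right j) *
            antipode k ((T.inner i').right j') * T.outer.right i') * R.outer.right i := by
    simp only [commutatorTensor, map_sum, LinearMap.mul'_apply, Finset.sum_mul, mul_assoc]
  _ = ∑ i ∈ R.outer.index, ∑ j ∈ (R.inner i).index,
        1 * (R.inner i).left j * n * antipode k ((R.inner i).right j) * R.outer.right i := by
    simp only [T.sum_mul_mul_antipode_mul, one_mul]
  _ = m * n := by rw [R.sum_mul_mul_antipode_mul, one_mul]

theorem lid_rTensor_counit_commutatorTensor :
    TensorProduct.lid k H (counit.rTensor H (commutatorTensor R T)) = n * m := by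
  refine Eq.trans ?_ (congrArg₂ (· * ·) T.sum_counit_mul_counit_smul R.sum_counit_mul_counit_smul)
  rw [Finset.mul_sum]
  simp_rw [Finset.mul_sum]
  simp_rw [Finset.sum_mul, smul_mul_smul_comm]
  simp only [commutatorTensor, map_sum, LinearMap.rTensor_tmul, lid_tmul, Bialgebra.counit_mul,
    counit_antipode]
  refine Finset.sum_congr rfl fun i _ => Finset.sum_congr rfl fun j _ =>
    Finset.sum_congr rfl fun i' _ => Finset.sum_congr rfl fun j' _ => ?_
  congr 1
  ring

theorem commutatorTensor_mem_range_rTensor_right {N : Subalgebra k H}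
    (hN : IsNormalHopfSubalgebra k N)
    (hT : ∀ i j, (T.inner i).left j ∈ N ∧ (T.inner i).right j ∈ N) :
    commutatorTensor R T ∈ LinearMap.range ((Subalgebra.toSubmodule N).subtype.rTensor H) := by
  rw [commutatorTensor]
  refine Submodule.sum_mem _ fun i _ => ?_
  rw [Finset.sum_comm]
  refine Submodule.sum_mem _ fun i' _ => ?_
  rw [Finset.sum_comm]
  refine Submodule.sum_mem _ fun j' _ => ?_
  rw [← sum_tmul, ← Finset.sum_mul, ← adjL_eq_sum _ (R.inner i)]
  exact tmul_mem_range_rTensor_subtype (P := Subalgebra.toSubmodule N)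
    (N.mul_mem (hN.2 _ (hT i' j').1 _).1 (hN.1.2 _ (hT i' j').2)) _

theorem commutatorTensor_mem_range_rTensor_left {M : Subalgebra k H}
    (hM : IsNormalHopfSubalgebra k M)
    (hR : ∀ i j, (R.inner i).left j ∈ M ∧ (R.inner i).right j ∈ M) :
    commutatorTensor R T ∈ LinearMap.range ((Subalgebra.toSubmodule M).subtype.rTensor H) := by
  rw [commutatorTensor]
  refine Submodule.sum_mem _ fun i _ => Submodule.sum_mem _ fun j _ =>
    Submodule.sum_mem _ fun i' _ => ?_
  have hadj : ∑ j' ∈ (T.inner i').index, (R.inner i).left j * (T.inner i').left j' *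
      antipode k ((R.inner i).right j) * antipode k ((T.inner i').right j') =
      (R.inner i).left j * adjL k (antipode k ((R.inner i).right j)) (T.outer.left i') := by
    rw [adjL_eq_sum _ (T.inner i'), Finset.mul_sum]
    simp only [mul_assoc]
  rw [← sum_tmul, hadj]
  exact tmul_mem_range_rTensor_subtype (P := Subalgebra.toSubmodule M)
    (M.mul_mem (hR i j).1 (hM.2 _ (hM.1.2 _ (hR i j).2) _).1) _

end CommutatorTensor

/-- If `M` and `N` are normal Hopf subalgebras of `H` with `M ∩ N = k·1`, then
`mn = nm` for all `m ∈ M` and `n ∈ N`. -/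
theorem stmt1 {k H : Type*} [Field k] [Ring H] [HopfAlgebra k H]
    (M N : Subalgebra k H) (hM : IsNormalHopfSubalgebra k M) (hN : IsNormalHopfSubalgebra k N)
    (hMN : M ⊓ N = ⊥) :
    ∀ m ∈ M, ∀ n ∈ N, m * n = n * m := by
  intro m hm n hn
  obtain ⟨R, hR⟩ := hM.1.exists_repr₂ hm
  obtain ⟨T, hT⟩ := hN.1.exists_repr₂ hn
  have hmem : commutatorTensor R T ∈
      LinearMap.range ((Subalgebra.toSubmodule (⊥ : Subalgebra k H)).subtype.rTensor H) := by
    rw [← hMN, Algebra.inf_toSubmodule]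
    exact mem_range_rTensor_subtype_inf (commutatorTensor_mem_range_rTensor_left R T hM hR)
      (commutatorTensor_mem_range_rTensor_right R T hN hT)
  rw [← mul'_commutatorTensor R T, ← lid_rTensor_counit_commutatorTensor R T]
  exact mul'_eq_lid_rTensor_counit_of_mem hmem
end

section
/- Let H be a semisimple Hopf algebra over an algebraically closed field k of characteristic zero, and let π₁, π₂ : H → H be Hopf algebra (bialgebra) homomorphisms which are normal endomorphisms and satisfy: π_i ∘ π_i = π_i for i = 1,2; π₁ ⋆ π₂ = id_H (convolution); and π₁ ∘ π₂ = π₂ ∘ π₁ = η ∘ ε. Then A := π₁(H) and L := π₂(H) are normal Hopf subalgebras of H with A ∩ L = k·1 and AL = H, and the multiplication map A ⊗ L → H, a ⊗ l ↦ al, is an isomorphism of Hopf algebras. -/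
open scoped TensorProduct

/-- A linear endomorphism of a bialgebra is a bialgebra homomorphism if it preserves the
unit, multiplication, counit and comultiplication. -/
def IsBialgebraHomLM {k H : Type*} [CommRing k] [Ring H] [Bialgebra k H]
    (f : H →ₗ[k] H) : Prop :=
  f 1 = 1 ∧ (∀ x y : H, f (x * y) = f x * f y) ∧
  Coalgebra.counit (R := k) ∘ₗ f = Coalgebra.counit ∧
  Coalgebra.comul (R := k) ∘ₗ f = (TensorProduct.map f f) ∘ₗ Coalgebra.comul

/-- The convolution product of two linear endomorphisms: `f ⋆ g = μ ∘ (f ⊗ g) ∘ Δ`. -/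
noncomputable def convMul {k H : Type*} [CommRing k] [Ring H] [Bialgebra k H]
    (f g : H →ₗ[k] H) : H →ₗ[k] H :=
  (LinearMap.mul' k H) ∘ₗ (TensorProduct.map f g) ∘ₗ Coalgebra.comul

/-!
The map `Φ := (π₁ ⊗ π₂) ∘ Δ : H → H ⊗ H` is an algebra map with `μ ∘ Φ = id`, and the
relations between `π₁` and `π₂` give `Φ (π₁ x) = π₁ x ⊗ 1` and `Φ (π₂ y) = 1 ⊗ π₂ y`.
Hence `Φ (a * l) = a ⊗ l` for `a ∈ A`, `l ∈ L`, so multiplication `A ⊗ L → H` is injective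
(it is onto since `h = μ (Φ h)`), and applying `μ ∘ Φ` to `l * a` shows that `A` and `L`
commute. For stability under `h ↦ S(h₁) a h₂` one writes `h = ∑ π₁(h₁) π₂(h₂)` and uses that
this adjoint action is a right action which is trivial on `L` (resp. `A`) when `a` commutes
with `L` (resp. `A`).
-/

open Coalgebra HopfAlgebra TensorProduct WithConv

lemma TensorProduct.map_mem_range_mapIncl {R M N P Q : Type*} [CommSemiring R]
    [AddCommMonoid M] [Module R M] [AddCommMonoid N] [Module R N] [AddCommMonoid P] [Module R P]
    [AddCommMonoid Q] [Module R Q] {φ : M →ₗ[R] P} {ψ : N →ₗ[R] Q} {p : Submodule R P}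
    {q : Submodule R Q}
    (hφ : ∀ x, φ x ∈ p) (hψ : ∀ y, ψ y ∈ q) (t : M ⊗[R] N) :
    map φ ψ t ∈ LinearMap.range (mapIncl p q) :=
  ⟨map (φ.codRestrict p hφ) (ψ.codRestrict q hψ) t, by
    rw [mapIncl, ← LinearMap.comp_apply, ← map_comp]; rfl⟩

section Antipode

variable {k H H' : Type*} [CommSemiring k] [Semiring H] [HopfAlgebra k H] [Semiring H']
  [HopfAlgebra k H']

lemma BialgHom.comp_antipode (f : H →ₐc[k] H') :
    (f : H →ₗ[k] H') ∘ₗ antipode k = antipode k ∘ₗ (f : H →ₗ[k] H') := by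
  have hleft : toConv ((f : H →ₗ[k] H') ∘ₗ antipode k) * toConv (f : H →ₗ[k] H') = 1 := by
    ext x
    rw [(ℛ k x).convMul_apply]
    simp [← map_mul, ← map_sum, sum_antipode_mul_eq_algebraMap_counit, AlgHomClass.commutes]
  have hright : toConv (f : H →ₗ[k] H') * toConv (antipode k ∘ₗ (f : H →ₗ[k] H')) = 1 := by
    ext x
    rw [(ℛ k x).convMul_apply]
    simpa using sum_mul_antipode_eq_algebraMap_counit ((ℛ k x).induced f)
  exact congr(ofConv $(left_inv_eq_right_inv hleft hright))

lemma BialgHom.map_antipode (f : H →ₐc[k] H') (x : H) : f (antipode k x) = antipode k (f x) :=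
  congr($(f.comp_antipode) x)

end Antipode

section AdjointAction

variable {k H H' : Type*} [CommRing k] [Ring H] [HopfAlgebra k H] [Ring H'] [HopfAlgebra k H']

lemma adjR_eq_sum {c : H} {ι : Type*} (r : Repr k c ι) (a : H) :
    adjR k a c = ∑ i ∈ r.index, antipode k (r.left i) * a * r.right i := by
  simp [adjR, ← r.eq]

lemma adjR_mul (a x y : H) : adjR k a (x * y) = adjR k (adjR k a x) y := by
  simp only [adjR_eq_sum ((ℛ k x).mul (ℛ k y)), adjR_eq_sum (ℛ k y), adjR_eq_sum (ℛ k x),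
    Finset.sum_product, Coalgebra.Repr.mul_left, Coalgebra.Repr.mul_right, Coalgebra.Repr.mul_index,
    antipode_mul_antidistrib, Finset.sum_mul, Finset.mul_sum, mul_assoc]
  exact Finset.sum_comm

lemma BialgHom.map_adjR (f : H →ₐc[k] H') (a x : H) : f (adjR k a x) = adjR k (f a) (f x) := by
  simp [adjR_eq_sum (ℛ k x), adjR_eq_sum ((ℛ k x).induced f), f.map_antipode]

lemma adjR_eq_counit_smul (f : H' →ₐc[k] H) {a : H} (ha : ∀ y, Commute a (f y)) (x : H') :
    adjR k a (f x) = counit (R := k) x • a := by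
  calc adjR k a (f x)
      = ∑ i ∈ (ℛ k x).index, antipode k (f ((ℛ k x).left i)) * a * f ((ℛ k x).right i) :=
        adjR_eq_sum ((ℛ k x).induced f) a
    _ = a * f (∑ i ∈ (ℛ k x).index, antipode k ((ℛ k x).left i) * (ℛ k x).right i) := by
        simp only [map_sum, map_mul, Finset.mul_sum, ← mul_assoc, ← f.map_antipode, (ha _).eq]
    _ = counit (R := k) x • a := by
        rw [sum_antipode_mul_eq_algebraMap_counit, AlgHomClass.commutes, Algebra.smul_def,
          Algebra.commutes]

end AdjointAction

lemma BialgHom.isHopfSubalgebra_range {k H H' : Type*} [CommRing k] [Ring H] [HopfAlgebra k H]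
    [Ring H'] [HopfAlgebra k H'] (f : H' →ₐc[k] H) : IsHopfSubalgebra k (f : H' →ₐ[k] H).range := by
  refine ⟨?_, ?_⟩
  · rintro _ ⟨x, rfl⟩
    change comul (f x) ∈ _
    rw [← CoalgHomClass.map_comp_comul_apply]
    exact TensorProduct.map_mem_range_mapIncl (f : H' →ₐ[k] H).mem_range_self
      (f : H' →ₐ[k] H).mem_range_self _
  · rintro _ ⟨x, rfl⟩
    exact ⟨antipode k x, f.map_antipode x⟩

lemma BialgHom.isNormalHopfSubalgebra_range {k H : Type*} [CommRing k] [Ring H]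
    [HopfAlgebra k H] (f : H →ₐc[k] H) (hadjL : ∀ h x, f (adjL k x h) = adjL k (f x) h)
    (hadjR : ∀ a ∈ (f : H →ₐ[k] H).range, ∀ h, adjR k a h ∈ (f : H →ₐ[k] H).range) :
    IsNormalHopfSubalgebra k (f : H →ₐ[k] H).range := by
  refine ⟨f.isHopfSubalgebra_range, fun a ha h => ⟨?_, hadjR a ha h⟩⟩
  obtain ⟨x, rfl⟩ := ha
  exact ⟨adjL k x h, hadjL h x⟩

section Splitting

variable {k H : Type*} [CommSemiring k] [Semiring H] [Bialgebra k H]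

structure IsComplementaryPair (f g : H →ₐc[k] H) : Prop where
  left_idem : ∀ x, f (f x) = f x
  right_idem : ∀ x, g (g x) = g x
  left_comp_right : ∀ x, f (g x) = algebraMap k H (counit x)
  right_comp_left : ∀ x, g (f x) = algebraMap k H (counit x)
  mul'_map_comul : ∀ x, LinearMap.mul' k H (map (f : H →ₗ[k] H) g (comul x)) = x

def splitComul (f g : H →ₐc[k] H) : H →ₐ[k] H ⊗[k] H :=
  (Algebra.TensorProduct.map (f : H →ₐ[k] H) g).comp (Bialgebra.comulAlgHom k H)

lemma splitComul_apply (f g : H →ₐc[k] H) (x : H) :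
    splitComul f g x = map (f : H →ₗ[k] H) g (comul x) := rfl

namespace IsComplementaryPair

variable {f g : H →ₐc[k] H} (hfg : IsComplementaryPair f g)
include hfg

lemma splitComul_left (x : H) : splitComul f g (f x) = f x ⊗ₜ 1 := by
  have := congr(LinearMap.lTensor H (Algebra.linearMap k H)
    $(sum_map_tmul_counit_eq f x (repr := ℛ k x)))
  rw [splitComul_apply, ← ((ℛ k x).induced f).eq]
  simp only [map_sum, LinearMap.lTensor_tmul, Algebra.linearMap_apply, map_one] at this
  simpa [hfg.left_idem, hfg.right_comp_left] using this

lemma splitComul_right (y : H) : splitComul f g (g y) = 1 ⊗ₜ g y := by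
  have := congr(LinearMap.rTensor H (Algebra.linearMap k H)
    $(sum_counit_tmul_map_eq g y (repr := ℛ k y)))
  rw [splitComul_apply, ← ((ℛ k y).induced g).eq]
  simp only [map_sum, LinearMap.rTensor_tmul, Algebra.linearMap_apply, map_one] at this
  simpa [hfg.right_idem, hfg.left_comp_right] using this

lemma splitComul_mul (x y : H) : splitComul f g (f x * g y) = f x ⊗ₜ g y := by
  rw [map_mul, hfg.splitComul_left, hfg.splitComul_right, Algebra.TensorProduct.tmul_mul_tmul,
    mul_one, one_mul]

lemma commute (x y : H) : Commute (f x) (g y) := by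
  calc f x * g y = LinearMap.mul' k H (splitComul f g (g y * f x)) := by
        rw [map_mul, hfg.splitComul_left, hfg.splitComul_right,
          Algebra.TensorProduct.tmul_mul_tmul, mul_one, one_mul, LinearMap.mul'_apply]
    _ = g y * f x := hfg.mul'_map_comul _

lemma induction_on {P : H → Prop} (zero : P 0) (add : ∀ x y, P x → P y → P (x + y))
    (mul : ∀ x y, P (f x * g y)) (h : H) : P h := by
  rw [← hfg.mul'_map_comul h]
  induction comul (R := k) h using TensorProduct.induction_on with
  | zero => simpa using zero
  | tmul x y => exact mul x y
  | add s t hs ht => simpa using add _ _ hs ht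

lemma range_inf_range : (f : H →ₐ[k] H).range ⊓ (g : H →ₐ[k] H).range = ⊥ := by
  refine eq_bot_iff.mpr fun x ⟨⟨y, hy⟩, ⟨z, hz⟩⟩ => Algebra.mem_bot.mpr ⟨counit (R := k) y, ?_⟩
  change f y = x at hy
  change g z = x at hz
  rw [← hfg.right_comp_left, hy, ← hz, hfg.right_idem]

lemma surjective_mul'_mapIncl : Function.Surjective (LinearMap.mul' k H ∘ₗ
    mapIncl (Subalgebra.toSubmodule (f : H →ₐ[k] H).range)
      (Subalgebra.toSubmodule (g : H →ₐ[k] H).range)) := by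
  intro h
  obtain ⟨t, ht⟩ := TensorProduct.map_mem_range_mapIncl
    (p := Subalgebra.toSubmodule (f : H →ₐ[k] H).range)
    (q := Subalgebra.toSubmodule (g : H →ₐ[k] H).range)
    (fun x => ⟨x, rfl⟩) (fun y => ⟨y, rfl⟩) (comul (R := k) h)
  exact ⟨t, by rw [LinearMap.comp_apply, ht]; exact hfg.mul'_map_comul h⟩

lemma toSubmodule_range_mul_toSubmodule_range :
    Subalgebra.toSubmodule (f : H →ₐ[k] H).range *
      Subalgebra.toSubmodule (g : H →ₐ[k] H).range = ⊤ := by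
  rw [Submodule.mul_eq_map₂, map₂_eq_range_lift_comp_mapIncl]
  exact LinearMap.range_eq_top.mpr hfg.surjective_mul'_mapIncl

lemma splitComul_mul'_mapIncl (u : Subalgebra.toSubmodule (f : H →ₐ[k] H).range ⊗[k]
    Subalgebra.toSubmodule (g : H →ₐ[k] H).range) :
    splitComul f g (LinearMap.mul' k H (mapIncl _ _ u)) = mapIncl _ _ u := by
  induction u using TensorProduct.induction_on with
  | zero => simp
  | tmul a l =>
    obtain ⟨_, x, rfl⟩ := a
    obtain ⟨_, y, rfl⟩ := l
    exact hfg.splitComul_mul x y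
  | add u v hu hv => simp only [map_add, hu, hv]

end IsComplementaryPair

end Splitting

lemma IsComplementaryPair.bijective_mul'_mapIncl {k H : Type*} [Field k] [Ring H] [Bialgebra k H]
    {f g : H →ₐc[k] H} (hfg : IsComplementaryPair f g) :
    Function.Bijective (LinearMap.mul' k H ∘ₗ
      mapIncl (Subalgebra.toSubmodule (f : H →ₐ[k] H).range)
        (Subalgebra.toSubmodule (g : H →ₐ[k] H).range)) := by
  refine ⟨fun s t hst => ?_, hfg.surjective_mul'_mapIncl⟩
  apply Module.Flat.tensorProduct_mapIncl_injective_of_right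
  rw [← hfg.splitComul_mul'_mapIncl s, ← hfg.splitComul_mul'_mapIncl t]
  exact congr(splitComul f g $hst)

namespace IsComplementaryPair

variable {k H : Type*} [CommRing k] [Ring H] [HopfAlgebra k H] {f g : H →ₐc[k] H}
  (hfg : IsComplementaryPair f g)
include hfg

lemma adjR_mem_range_left {a : H} (ha : a ∈ (f : H →ₐ[k] H).range) (h : H) :
    adjR k a h ∈ (f : H →ₐ[k] H).range := by
  obtain ⟨z, rfl⟩ := ha
  induction h using hfg.induction_on with
  | zero => simp
  | add _ _ hx hy => rw [map_add]; exact add_mem hx hy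
  | mul x y =>
    change adjR k (f z) (f x * g y) ∈ _
    rw [adjR_mul, ← f.map_adjR, adjR_eq_counit_smul g (hfg.commute _)]
    exact Subalgebra.smul_mem _ (AlgHom.mem_range_self _ _) _

lemma adjR_mem_range_right {a : H} (ha : a ∈ (g : H →ₐ[k] H).range) (h : H) :
    adjR k a h ∈ (g : H →ₐ[k] H).range := by
  obtain ⟨z, rfl⟩ := ha
  induction h using hfg.induction_on with
  | zero => simp
  | add _ _ hx hy => rw [map_add]; exact add_mem hx hy
  | mul x y =>
    change adjR k (g z) (f x * g y) ∈ _
    rw [adjR_mul, adjR_eq_counit_smul f (fun x => (hfg.commute x z).symm), ← map_smul,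
      ← g.map_adjR]
    exact AlgHom.mem_range_self _ _

end IsComplementaryPair

def IsBialgebraHomLM.toBialgHom {k H : Type*} [CommRing k] [Ring H] [Bialgebra k H]
    {π : H →ₗ[k] H} (hπ : IsBialgebraHomLM π) : H →ₐc[k] H where
  toLinearMap := π
  counit_comp := hπ.2.2.1
  map_comp_comul := hπ.2.2.2.symm
  map_one' := hπ.1
  map_mul' := hπ.2.1

theorem stmt8_general {k H : Type*} [Field k] [Ring H] [HopfAlgebra k H]
    (π₁ π₂ : H →ₗ[k] H)
    (hb₁ : IsBialgebraHomLM π₁) (hb₂ : IsBialgebraHomLM π₂)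
    (hn₁ : ∀ h x : H, π₁ (adjL k x h) = adjL k (π₁ x) h)
    (hn₂ : ∀ h x : H, π₂ (adjL k x h) = adjL k (π₂ x) h)
    (hi₁ : π₁ ∘ₗ π₁ = π₁) (hi₂ : π₂ ∘ₗ π₂ = π₂)
    (hconv : convMul π₁ π₂ = LinearMap.id)
    (hcomp₁ : π₁ ∘ₗ π₂ = (Algebra.linearMap k H) ∘ₗ Coalgebra.counit)
    (hcomp₂ : π₂ ∘ₗ π₁ = (Algebra.linearMap k H) ∘ₗ Coalgebra.counit) :
    ∃ A L : Subalgebra k H,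
      (A : Set H) = Set.range π₁ ∧ (L : Set H) = Set.range π₂ ∧
      IsNormalHopfSubalgebra k A ∧ IsNormalHopfSubalgebra k L ∧
      A ⊓ L = ⊥ ∧
      Subalgebra.toSubmodule A * Subalgebra.toSubmodule L = ⊤ ∧
      Function.Bijective ((LinearMap.mul' k H).comp
        (TensorProduct.mapIncl (Subalgebra.toSubmodule A) (Subalgebra.toSubmodule L))) ∧
      ∀ a ∈ A, ∀ l ∈ L, a * l = l * a := by
  let f₁ := hb₁.toBialgHom
  let f₂ := hb₂.toBialgHom
  have hfg : IsComplementaryPair f₁ f₂ :=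
    ⟨fun x => congr($hi₁ x), fun x => congr($hi₂ x), fun x => congr($hcomp₁ x),
      fun x => congr($hcomp₂ x), fun x => congr($hconv x)⟩
  refine ⟨(f₁ : H →ₐ[k] H).range, (f₂ : H →ₐ[k] H).range, AlgHom.coe_range _,
    AlgHom.coe_range _, f₁.isNormalHopfSubalgebra_range hn₁ fun _ => hfg.adjR_mem_range_left,
    f₂.isNormalHopfSubalgebra_range hn₂ fun _ => hfg.adjR_mem_range_right, hfg.range_inf_range,
    hfg.toSubmodule_range_mul_toSubmodule_range, hfg.bijective_mul'_mapIncl, ?_⟩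
  rintro _ ⟨x, rfl⟩ _ ⟨y, rfl⟩
  exact hfg.commute x y

/-- Let `H` be a semisimple Hopf algebra over an algebraically closed field of
characteristic zero and `π₁, π₂ : H → H` bialgebra homomorphisms which are normal
endomorphisms, idempotent under composition, with `π₁ ⋆ π₂ = id` and
`π₁ ∘ π₂ = π₂ ∘ π₁ = η ∘ ε`.  Then `A := π₁(H)` and `L := π₂(H)` are normal Hopf
subalgebras with `A ∩ L = k·1` and `AL = H`, and the multiplication map `A ⊗ L → H`
is an isomorphism of Hopf algebras (it is bijective, and multiplicative since the
elements of `A` and `L` commute; its compatibility with the coalgebra structures is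
automatic). -/
theorem stmt8 {k H : Type*} [Field k] [IsAlgClosed k] [CharZero k] [Ring H] [HopfAlgebra k H]
    [FiniteDimensional k H] [IsSemisimpleRing H]
    (π₁ π₂ : H →ₗ[k] H)
    (hb₁ : IsBialgebraHomLM π₁) (hb₂ : IsBialgebraHomLM π₂)
    (hn₁ : ∀ h x : H, π₁ (adjL k x h) = adjL k (π₁ x) h)
    (hn₂ : ∀ h x : H, π₂ (adjL k x h) = adjL k (π₂ x) h)
    (hi₁ : π₁ ∘ₗ π₁ = π₁) (hi₂ : π₂ ∘ₗ π₂ = π₂)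
    (hconv : convMul π₁ π₂ = LinearMap.id)
    (hcomp₁ : π₁ ∘ₗ π₂ = (Algebra.linearMap k H) ∘ₗ Coalgebra.counit)
    (hcomp₂ : π₂ ∘ₗ π₁ = (Algebra.linearMap k H) ∘ₗ Coalgebra.counit) :
    ∃ A L : Subalgebra k H,
      (A : Set H) = Set.range π₁ ∧ (L : Set H) = Set.range π₂ ∧
      IsNormalHopfSubalgebra k A ∧ IsNormalHopfSubalgebra k L ∧
      A ⊓ L = ⊥ ∧
      Subalgebra.toSubmodule A * Subalgebra.toSubmodule L = ⊤ ∧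
      Function.Bijective ((LinearMap.mul' k H).comp
        (TensorProduct.mapIncl (Subalgebra.toSubmodule A) (Subalgebra.toSubmodule L))) ∧
      ∀ a ∈ A, ∀ l ∈ L, a * l = l * a :=
  stmt8_general π₁ π₂ hb₁ hb₂ hn₁ hn₂ hi₁ hi₂ hconv hcomp₁ hcomp₂
end
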